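/- Let n ≥ 4 be even, let 0 < a_1 ≤ a_2 ≤ … ≤ a_n, and let A_1,…,A_{n/2−1} ≥ 0 with at least one A_k ≠ 0. Define the polynomial Q(x) = (x+a_1)(x+a_2)⋯(x+a_n) + Σ_{k=1}^{n/2−1} A_k x^{2k}. Then Q has at most two real roots in the open interval (−a_n, −a_{n−1}) and at most two real roots in the open interval (−a_2, −a_1). -/

import Mathlib

/-!
Substitute `x = -exp t`. On either interval an odd number of the factors `x + aᵢ` are negative
(for the upper interval because `n` is even), so the zeros of `Q` there are the solutions of
`∑ᵢ log |aᵢ - eᵗ| = log ∑ₖ Aₖ e^{2kt}`. Each `log |aᵢ - eᵗ|` is strictly concave in `t`, its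
derivative `1 + aᵢ / (eᵗ - aᵢ)` being decreasing, while the right-hand side is a log-sum-exp,
which is convex by Cauchy–Schwarz. A strictly concave function has at most two zeros.
-/

open Real Set

theorem Set.encard_le_two_of_forall_not_lt_lt {α : Type*} [LinearOrder α] {t : Set α}
    (ht : ∀ x ∈ t, ∀ y ∈ t, ∀ z ∈ t, x < y → y < z → False) : t.encard ≤ 2 := by
  by_contra! h
  obtain ⟨u, hut, hu⟩ := exists_subset_encard_eq (Order.add_one_le_of_lt h)
  have hfin : u.Finite := finite_of_encard_eq_coe hu
  have hcard : hfin.toFinset.card = 3 := by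
    rw [hfin.encard_eq_coe_toFinset_card] at hu
    exact_mod_cast hu
  set e := hfin.toFinset.orderEmbOfFin hcard
  have he : ∀ i, e i ∈ t := fun i => hut (hfin.mem_toFinset.1 (Finset.orderEmbOfFin_mem _ _ i))
  exact ht _ (he 0) _ (he 1) _ (he 2) (e.strictMono (by decide)) (e.strictMono (by decide))

theorem StrictConcaveOn.encard_sep_eq_le_two {s : Set ℝ} {f : ℝ → ℝ}
    (hf : StrictConcaveOn ℝ s f) (c : ℝ) : {x ∈ s | f x = c}.encard ≤ 2 := by
  refine encard_le_two_of_forall_not_lt_lt fun x ⟨hx, hfx⟩ y ⟨_, hfy⟩ z ⟨hz, hfz⟩ hxy hyz => ?_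
  have := hf.slope_anti_adjacent hx hz hxy hyz
  simp [hfx, hfy, hfz] at this

theorem StrictConcaveOn.fun_sum {ι : Type*} {s : Finset ι} {D : Set ℝ} {f : ι → ℝ → ℝ}
    (hs : s.Nonempty) (hf : ∀ i ∈ s, StrictConcaveOn ℝ D (f i)) :
    StrictConcaveOn ℝ D (fun x => ∑ i ∈ s, f i x) := by
  obtain ⟨i₀, hi₀⟩ := hs
  refine ⟨(hf i₀ hi₀).1, fun x hx y hy hxy a b ha hb hab => ?_⟩
  simpa only [smul_eq_mul, Finset.mul_sum, ← Finset.sum_add_distrib] using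
    Finset.sum_lt_sum_of_nonempty ⟨i₀, hi₀⟩ fun i hi => (hf i hi).2 hx hy hxy ha hb hab

theorem convexOn_log_sum_mul_exp {κ : Type*} (s : Finset κ) {w : κ → ℝ} (c : κ → ℝ)
    (hw : ∀ k ∈ s, 0 ≤ w k) (hw' : ∃ k ∈ s, w k ≠ 0) :
    ConvexOn ℝ univ fun t => log (∑ k ∈ s, w k * exp (c k * t)) := by
  set M : ℕ → ℝ → ℝ := fun j t => ∑ k ∈ s, w k * c k ^ j * exp (c k * t)
  have hM : ∀ j t, HasDerivAt (M j) (M (j + 1) t) t := fun j t => by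
    refine (HasDerivAt.fun_sum fun k _ =>
      (((hasDerivAt_id t).const_mul (c k)).exp.const_mul (w k * c k ^ j))).congr_deriv ?_
    exact Finset.sum_congr rfl fun k _ => by simp only [id]; ring
  have hM₀ : ∀ t, M 0 t = ∑ k ∈ s, w k * exp (c k * t) := fun t => by simp [M]
  have hpos : ∀ t, 0 < M 0 t := fun t => by
    obtain ⟨k, hk, hwk⟩ := hw'
    rw [hM₀]
    exact Finset.sum_pos' (fun k hk => mul_nonneg (hw k hk) (exp_pos _).le)
      ⟨k, hk, mul_pos ((hw k hk).lt_of_ne' hwk) (exp_pos _)⟩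
  have hcs : ∀ t, M 1 t ^ 2 ≤ M 0 t * M 2 t := fun t =>
    Finset.sum_sq_le_sum_mul_sum_of_sq_le_mul s
      (fun k hk => by have := hw k hk; positivity)
      (fun k hk => by have := hw k hk; positivity)
      (fun k _ => le_of_eq (by ring))
  simp only [← hM₀]
  refine convexOn_of_hasDerivWithinAt2_nonneg convex_univ (f' := fun t => M 1 t / M 0 t)
    (f'' := fun t => (M 2 t * M 0 t - M 1 t * M 1 t) / M 0 t ^ 2)
    (fun t _ => ((hM 0 t).log (hpos t).ne').continuousAt.continuousWithinAt)
    (fun t _ => ((hM 0 t).log (hpos t).ne').hasDerivWithinAt)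
    (fun t _ => ((hM 1 t).div (hM 0 t) (hpos t).ne').hasDerivWithinAt)
    (fun t _ => div_nonneg (by nlinarith [hcs t]) (sq_nonneg _))

theorem strictConcaveOn_log_sub_exp {a : ℝ} (ha : 0 < a) {D : Set ℝ} (hD : Convex ℝ D)
    (hDa : ∀ t ∈ D, exp t ≠ a) : StrictConcaveOn ℝ D fun t => log (a - exp t) := by
  have hderiv : ∀ t ∈ D, HasDerivAt (fun t => log (a - exp t)) (-exp t / (a - exp t)) t :=
    fun t ht => by
      simpa using ((hasDerivAt_exp t).const_sub a).log (sub_ne_zero.2 (hDa t ht).symm)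
  refine StrictAntiOn.strictConcaveOn_of_deriv hD
    (fun t ht => (hderiv t ht).continuousAt.continuousWithinAt) ?_
  intro t₁ ht₁ t₂ ht₂ ht
  replace ht₁ := interior_subset ht₁
  replace ht₂ := interior_subset ht₂
  rw [(hderiv t₁ ht₁).deriv, (hderiv t₂ ht₂).deriv]
  have hexp := exp_lt_exp.2 ht
  -- `a - exp t` keeps its sign on `D`: otherwise `log a ∈ [t₁, t₂] ⊆ D`.
  have hsign : 0 < (a - exp t₁) * (a - exp t₂) := by
    by_contra! h
    have h₁ : exp t₁ ≤ a := by nlinarith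
    have h₂ : a ≤ exp t₂ := by nlinarith
    refine hDa (log a) (hD.ordConnected.out ht₁ ht₂ ⟨?_, ?_⟩) (exp_log ha)
    · rwa [le_log_iff_exp_le ha]
    · rwa [log_le_iff_le_exp ha]
  have hne₁ : a - exp t₁ ≠ 0 := sub_ne_zero.2 (hDa t₁ ht₁).symm
  have hne₂ : a - exp t₂ ≠ 0 := sub_ne_zero.2 (hDa t₂ ht₂).symm
  have hdiff : -exp t₁ / (a - exp t₁) - -exp t₂ / (a - exp t₂)
      = a * (exp t₂ - exp t₁) / ((a - exp t₁) * (a - exp t₂)) := by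
    field_simp
    ring
  have : 0 < a * (exp t₂ - exp t₁) / ((a - exp t₁) * (a - exp t₂)) :=
    div_pos (mul_pos ha (sub_pos.2 hexp)) hsign
  linarith

theorem encard_sep_eq_encard_neg_exp {s : Set ℝ} (hs : s ⊆ Iio 0) (p : ℝ → Prop) :
    {x ∈ s | p x}.encard = {t | -exp t ∈ s ∧ p (-exp t)}.encard := by
  have himage : (fun t => -exp t) '' {t | -exp t ∈ s ∧ p (-exp t)} = {x ∈ s | p x} := by
    ext x
    refine ⟨?_, fun hx => ⟨log (-x), ?_⟩⟩
    · rintro ⟨t, ht, rfl⟩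
      exact ht
    · have hexp : exp (log (-x)) = -x := exp_log (neg_pos.2 (hs hx.1))
      simp only [mem_ofPred_eq, hexp, neg_neg, and_true]
      exact hx
  have hinj : Function.Injective fun t => -exp t := fun _ _ h => exp_injective (neg_injective h)
  rw [← himage, hinj.injOn.encard_image]

-- `Real.log` is `log |·|`, so a negative `p` can be compared with `q` through its logarithm.
theorem add_eq_zero_iff_log_eq_log {p q : ℝ} (hp : p < 0) (hq : 0 < q) :
    p + q = 0 ↔ log p = log q := by
  rw [← log_neg_eq_log p, log_injOn_pos.eq_iff (neg_pos.2 hp) hq, neg_eq_iff_eq_neg,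
    add_eq_zero_iff_eq_neg]

theorem Finset.prod_neg_of_odd_card {ι R : Type*} [CommRing R] [LinearOrder R]
    [IsStrictOrderedRing R] {s : Finset ι} {f : ι → R} (hf : ∀ i ∈ s, f i < 0)
    (hs : Odd s.card) : ∏ i ∈ s, f i < 0 := by
  have h := Finset.prod_neg (s := s) fun i => -f i
  simp only [neg_neg, hs.neg_one_pow, neg_one_mul] at h
  rw [h, neg_lt_zero]
  exact Finset.prod_pos fun i hi => neg_pos.2 (hf i hi)

theorem encard_zeros_prod_add_sum_le_two {ι : Type*} [Fintype ι] {a : ι → ℝ}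
    (ha : ∀ i, 0 < a i) {K : Finset ℕ} {A : ℕ → ℝ} (hA : ∀ k ∈ K, 0 ≤ A k)
    (hA' : ∃ k ∈ K, A k ≠ 0) {s : Set ℝ} [hs : s.OrdConnected]
    (hneg : ∀ x ∈ s, ∏ i, (x + a i) < 0) :
    {x ∈ s | ∏ i, (x + a i) + ∑ k ∈ K, A k * x ^ (2 * k) = 0}.encard ≤ 2 := by
  rcases s.eq_empty_or_nonempty with rfl | ⟨x₀, hx₀⟩
  · simp
  have : Nonempty ι := by
    by_contra h
    exact absurd (hneg x₀ hx₀) (by simp [not_nonempty_iff.1 h])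
  have hs₀ : s ⊆ Iio 0 := fun x hx => mem_Iio.2 <| by
    by_contra! h
    exact (hneg x hx).not_ge (Finset.prod_pos fun i _ => by linarith [ha i]).le
  rw [encard_sep_eq_encard_neg_exp hs₀]
  set D := {t | -exp t ∈ s}
  have hD : Convex ℝ D := (hs.preimage_anti fun _ _ h => neg_le_neg (exp_le_exp.2 h)).convex
  have hfactor : ∀ t ∈ D, ∀ i, a i - exp t ≠ 0 := fun t ht i => by
    simpa [neg_add_eq_sub] using Finset.prod_ne_zero_iff.1 (hneg _ ht).ne i (Finset.mem_univ i)
  set H : ℝ → ℝ := fun t =>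
    ∑ i, log (a i - exp t) - log (∑ k ∈ K, A k * exp (((2 * k : ℕ) : ℝ) * t))
  have hH : StrictConcaveOn ℝ D H :=
    (StrictConcaveOn.fun_sum Finset.univ_nonempty fun i _ => strictConcaveOn_log_sub_exp (ha i) hD
      fun t ht => (sub_ne_zero.1 (hfactor t ht i)).symm).sub_convexOn
      ((convexOn_log_sum_mul_exp K _ hA hA').subset (subset_univ _) hD)
  convert hH.encard_sep_eq_le_two 0 using 2
  refine Set.ext fun t => and_congr_right fun ht => ?_
  have hpow : ∀ k, (-exp t) ^ (2 * k) = exp (((2 * k : ℕ) : ℝ) * t) := fun k => by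
    rw [(even_two_mul k).neg_pow, exp_nat_mul]
  have hsum : 0 < ∑ k ∈ K, A k * exp (((2 * k : ℕ) : ℝ) * t) := by
    obtain ⟨k, hk, hAk⟩ := hA'
    exact Finset.sum_pos' (fun k hk => mul_nonneg (hA k hk) (exp_pos _).le)
      ⟨k, hk, mul_pos ((hA k hk).lt_of_ne' hAk) (exp_pos _)⟩
  simp only [hpow, neg_add_eq_sub, H, sub_eq_zero]
  rw [add_eq_zero_iff_log_eq_log (by simpa [neg_add_eq_sub] using hneg _ ht) hsum,
    log_prod fun i _ => hfactor t ht i]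

theorem lemma2_even_Q_roots
    (n : ℕ) (hn : 4 ≤ n) (heven : Even n)
    (a : Fin n → ℝ) (hpos : ∀ i, 0 < a i) (hmono : Monotone a)
    (A : ℕ → ℝ) (hA : ∀ k ∈ Finset.Icc 1 (n / 2 - 1), 0 ≤ A k)
    (hA' : ∃ k ∈ Finset.Icc 1 (n / 2 - 1), A k ≠ 0)
    (Q : ℝ → ℝ)
    (hQ : ∀ x, Q x = (∏ i, (x + a i)) +
      ∑ k ∈ Finset.Icc 1 (n / 2 - 1), A k * x ^ (2 * k)) :
    Set.encard {x ∈ Set.Ioo (-(a ⟨n - 1, by omega⟩)) (-(a ⟨n - 2, by omega⟩)) |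
      Q x = 0} ≤ 2 ∧
    Set.encard {x ∈ Set.Ioo (-(a ⟨1, by omega⟩)) (-(a ⟨0, by omega⟩)) |
      Q x = 0} ≤ 2 := by
  obtain rfl : Q = _ := funext hQ
  refine ⟨encard_zeros_prod_add_sum_le_two hpos hA hA' fun x hx => ?_,
    encard_zeros_prod_add_sum_le_two hpos hA hA' fun x hx => ?_⟩
  · set last : Fin n := ⟨n - 1, by omega⟩
    rw [← Finset.mul_prod_erase _ _ (Finset.mem_univ last)]
    refine mul_neg_of_pos_of_neg (by linarith [hx.1]) (Finset.prod_neg_of_odd_card ?_ ?_)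
    · intro i hi
      have hi' : (i : ℕ) ≠ n - 1 := Fin.val_ne_of_ne (Finset.ne_of_mem_erase hi)
      have : a i ≤ a ⟨n - 2, by omega⟩ := hmono (Fin.le_def.2 (show (i : ℕ) ≤ n - 2 by omega))
      linarith [hx.2]
    · rw [Finset.card_erase_of_mem (Finset.mem_univ last), Finset.card_univ, Fintype.card_fin]
      exact Nat.Even.sub_odd (by omega) heven odd_one
  · set first : Fin n := ⟨0, by omega⟩
    rw [← Finset.mul_prod_erase _ _ (Finset.mem_univ first)]
    refine mul_neg_of_neg_of_pos (by linarith [hx.2]) (Finset.prod_pos fun i hi => ?_)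
    have hi' : (i : ℕ) ≠ 0 := Fin.val_ne_of_ne (Finset.ne_of_mem_erase hi)
    have : a ⟨1, by omega⟩ ≤ a i := hmono (Fin.le_def.2 (show 1 ≤ (i : ℕ) by omega))
    linarith [hx.1]
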